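/- arXiv:1203.5547 — 2 statements merged into one kernel-verified Lean document; each statement's English description precedes it below -/
import Mathlib

section
/- Let x₁,…,x_k ∈ ℂⁿ and y₁,…,y_k ∈ ℂᵐ be unit vectors. There exists a trace-preserving completely positive map T : M_n(ℂ) → M_m(ℂ) with T(x_ix_iᴴ) = y_iy_iᴴ for i = 1,…,k if and only if there exist a positive integer s with ms ≥ n, unit vectors v₁,…,v_k ∈ ℂˢ, and a unitary matrix U ∈ M_{ms}(ℂ) such that, for each i = 1,…,k, U applied to the vector obtained from x_i by appending ms − n zero entries equals the Kronecker product v_i ⊗ y_i. -/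
open Matrix
open scoped ComplexOrder

/-!
If `∑ₜ Fₜ xxᴴ Fₜᴴ = yyᴴ` with `‖y‖ = 1`, then every `Fₜ x` is a multiple `cₜ y`, since a sum of
positive rank-one matrices equal to `yyᴴ` has all its summands proportional to it; and
`∑ |cₜ|² = 1`. Stacking the Kraus operators `Fₜ` gives an isometry `V : ℂⁿ → ℂ^{ms}` (so `n ≤ ms`)
with `V x = c ⊗ y`, and extending the orthonormal columns of `V` to an orthonormal basis gives the
unitary `U`. Conversely, the first `n` columns of `U` form an isometry, and its `m × n` blocks are
Kraus operators with `Fₜ xᵢ = vᵢₜ yᵢ`.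
-/

/-- The vector in `ℂ^N` obtained from `v ∈ ℂⁿ` by appending `N - n` zero entries. -/
def padVec {n : ℕ} (N : ℕ) (v : Fin n → ℂ) : Fin N → ℂ := fun a =>
  if h : (a : ℕ) < n then v ⟨a, h⟩ else 0

/-- The vector in `ℂ^{m·s}` obtained by stacking the vectors `y 0, …, y (s-1) ∈ ℂᵐ`. -/
def stackVec {m s : ℕ} (y : Fin s → Fin m → ℂ) : Fin (m * s) → ℂ := fun a =>
  if hm : 0 < m then
    y ⟨(a : ℕ) / m, by
        rw [Nat.div_lt_iff_lt_mul hm]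
        exact lt_of_lt_of_eq a.isLt (Nat.mul_comm m s)⟩
      ⟨(a : ℕ) % m, Nat.mod_lt _ hm⟩
  else 0

/-- The Kronecker product `v ⊗ y ∈ ℂ^{m·s}` of `v ∈ ℂˢ` and `y ∈ ℂᵐ`: the block of
entries indexed by `j` consists of `v j • y`. -/
def kronVec {m s : ℕ} (v : Fin s → ℂ) (y : Fin m → ℂ) : Fin (m * s) → ℂ :=
  stackVec (fun t p => v t * y p)

section RankOne

variable {𝕜 ι κ : Type*} [RCLike 𝕜] [Fintype κ]

lemma mul_vecMulVec_mul_conjTranspose {ι' : Type*} [Fintype ι] (F : Matrix ι' ι 𝕜)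
    (x : ι → 𝕜) :
    F * vecMulVec x (star x) * Fᴴ = vecMulVec (F *ᵥ x) (star (F *ᵥ x)) := by
  rw [mul_vecMulVec, vecMulVec_mul, star_mulVec]

lemma sum_vecMulVec_smul {c : κ → 𝕜} (hc : star c ⬝ᵥ c = 1) (y : ι → 𝕜) :
    ∑ t, vecMulVec (c t • y) (star (c t • y)) = vecMulVec y (star y) := by
  simp only [star_smul, smul_vecMulVec, vecMulVec_smul, smul_smul, ← Finset.sum_smul]
  rw [show ∑ t, star (c t) * c t = star c ⬝ᵥ c from rfl, hc, one_smul]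

lemma exists_eq_smul_of_sum_vecMulVec_eq [Fintype ι] {w : κ → ι → 𝕜} {y : ι → 𝕜}
    (hy : star y ⬝ᵥ y = 1)
    (h : ∑ t, vecMulVec (w t) (star (w t)) = vecMulVec y (star y)) :
    ∃ c : κ → 𝕜, star c ⬝ᵥ c = 1 ∧ ∀ t, w t = c t • y := by
  set c : κ → 𝕜 := fun t => star y ⬝ᵥ w t
  have hnorm : ∑ t, star (w t) ⬝ᵥ w t = 1 := by
    simpa [trace_sum, dotProduct_comm _ (star _), hy] using congrArg trace h
  have hc : star c ⬝ᵥ c = 1 := by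
    have := congrArg (fun M => star y ⬝ᵥ M *ᵥ y) h
    simp only [sum_mulVec, vecMulVec_mulVec, op_smul_eq_smul, dotProduct_sum, dotProduct_smul,
      hy, smul_eq_mul, one_mul] at this
    rw [← this, dotProduct]
    refine Finset.sum_congr rfl fun t _ => ?_
    simp [c, star_dotProduct (w t) y]
  -- `∑ ‖w t - c t • y‖² = ∑ ‖w t‖² - ∑ |c t|² = 0`
  have hres : ∑ t, star (w t - c t • y) ⬝ᵥ (w t - c t • y) = 0 := by
    have hexp : ∀ t, star (w t - c t • y) ⬝ᵥ (w t - c t • y) =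
        star (w t) ⬝ᵥ w t - star (c t) * c t := by
      intro t
      have hwy : star (w t) ⬝ᵥ y = star (c t) := star_dotProduct (w t) y
      simp only [star_sub, star_smul, sub_dotProduct, dotProduct_sub, smul_dotProduct,
        dotProduct_smul, smul_eq_mul, hwy, hy]
      ring
    rw [Finset.sum_congr rfl fun t _ => hexp t, Finset.sum_sub_distrib, hnorm]
    exact sub_eq_zero.mpr hc.symm
  refine ⟨c, hc, fun t => sub_eq_zero.mp (dotProduct_star_self_eq_zero.mp ?_)⟩
  exact (Finset.sum_eq_zero_iff_of_nonneg fun t _ => dotProduct_star_self_nonneg _).mp hres t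
    (Finset.mem_univ t)

end RankOne

section Isometry

variable {𝕜 ι κ : Type*} [RCLike 𝕜] [Fintype κ] [DecidableEq ι]

lemma orthonormal_cols_iff_conjTranspose_mul_self_eq_one {V : Matrix κ ι 𝕜} :
    Orthonormal 𝕜 (fun j => WithLp.toLp 2 (fun a => V a j) : ι → EuclideanSpace 𝕜 κ) ↔
      Vᴴ * V = 1 := by
  rw [← gram_eq_one_iff_orthonormal, gram_eq_conjTranspose_mul (EuclideanSpace.basisFun κ 𝕜)]
  rfl

lemma exists_mem_unitaryGroup_submatrix_eq [Fintype ι] [DecidableEq κ] (e : ι ↪ κ)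
    {V : Matrix κ ι 𝕜} (hV : Vᴴ * V = 1) :
    ∃ U ∈ unitaryGroup κ 𝕜, U.submatrix id e = V := by
  set col : ι → EuclideanSpace 𝕜 κ := fun j => WithLp.toLp 2 (fun a => V a j)
  have hrestrict : (Set.range e).domRestrict (Function.extend e col 0) =
      col ∘ (Equiv.ofInjective e e.injective).symm := by
    ext ⟨_, j, rfl⟩ : 1
    simp [Set.domRestrict_apply, e.injective.extend_apply]
  obtain ⟨b, hb⟩ := Orthonormal.exists_orthonormalBasis_extension_of_card_eq (by simp)
    (hrestrict ▸ (orthonormal_cols_iff_conjTranspose_mul_self_eq_one.mpr hV).comp _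
      (Equiv.injective _))
  refine ⟨(EuclideanSpace.basisFun κ 𝕜).toBasis.toMatrix b,
    (EuclideanSpace.basisFun κ 𝕜).toMatrix_orthonormalBasis_mem_unitary b, ?_⟩
  ext a j
  simp [Module.Basis.toMatrix_apply, hb (e j) ⟨j, rfl⟩, e.injective.extend_apply, col]

lemma card_le_card_of_conjTranspose_mul_self_eq_one [Fintype ι] {V : Matrix κ ι 𝕜}
    (hV : Vᴴ * V = 1) :
    Fintype.card ι ≤ Fintype.card κ := by
  simpa using
    (orthonormal_cols_iff_conjTranspose_mul_self_eq_one.mpr hV).linearIndependent.fintype_card_le_finrank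

end Isometry

section Padding

variable {n N : ℕ}

lemma padVec_castLE (h : n ≤ N) (v : Fin n → ℂ) (b : Fin n) :
    padVec N v (Fin.castLE h b) = v b := by
  simp [padVec]

lemma mulVec_padVec {ι : Type*} (h : n ≤ N) (U : Matrix ι (Fin N) ℂ) (v : Fin n → ℂ) :
    U *ᵥ padVec N v = U.submatrix id (Fin.castLE h) *ᵥ v := by
  ext a
  refine (Fintype.sum_of_injective _ (Fin.castLE_injective h) _ _ ?_ fun b => ?_).symm
  · rintro c hc
    rw [padVec, dif_neg fun hcn => hc ⟨⟨c, hcn⟩, rfl⟩, mul_zero]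
  · rw [padVec_castLE]; rfl

end Padding

section Stacking

variable {m n s : ℕ}

/-- Block `t`, row `p` of `ℂ^{m·s}` sits at index `p + m * t`, matching `stackVec`. -/
def stackIdx (m s : ℕ) : Fin s × Fin m ≃ Fin (m * s) :=
  finProdFinEquiv.trans (finCongr (Nat.mul_comm s m))

lemma stackVec_stackIdx (y : Fin s → Fin m → ℂ) (t : Fin s) (p : Fin m) :
    stackVec y (stackIdx m s (t, p)) = y t p := by
  have hm : 0 < m := p.pos
  have hval : ((stackIdx m s (t, p) : Fin (m * s)) : ℕ) = p + m * t := rfl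
  simp only [stackVec, dif_pos hm, hval, Nat.add_mul_div_left _ _ hm, Nat.div_eq_of_lt p.isLt,
    Nat.zero_add, Nat.add_mul_mod_self_left, Nat.mod_eq_of_lt p.isLt]

lemma stackVec_injective : Function.Injective (stackVec : (Fin s → Fin m → ℂ) → _) :=
  fun y z h => funext₂ fun t p => by
    simpa only [stackVec_stackIdx] using congrFun h (stackIdx m s (t, p))

lemma kronVec_eq_stackVec (v : Fin s → ℂ) (y : Fin m → ℂ) :
    kronVec v y = stackVec fun t => v t • y :=
  rfl

def stackMat (F : Fin s → Matrix (Fin m) (Fin n) ℂ) : Matrix (Fin (m * s)) (Fin n) ℂ :=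
  of fun a b => stackVec (fun t p => F t p b) a

lemma stackMat_stackIdx (F : Fin s → Matrix (Fin m) (Fin n) ℂ) (t : Fin s) (p : Fin m)
    (b : Fin n) :
    stackMat F (stackIdx m s (t, p)) b = F t p b :=
  stackVec_stackIdx (fun t p => F t p b) t p

lemma stackMat_mulVec (F : Fin s → Matrix (Fin m) (Fin n) ℂ) (x : Fin n → ℂ) :
    stackMat F *ᵥ x = stackVec fun t => F t *ᵥ x := by
  ext a
  obtain ⟨⟨t, p⟩, rfl⟩ := (stackIdx m s).surjective a
  simp only [stackVec_stackIdx, mulVec, dotProduct, stackMat_stackIdx]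

lemma conjTranspose_stackMat_mul_self (F : Fin s → Matrix (Fin m) (Fin n) ℂ) :
    (stackMat F)ᴴ * stackMat F = ∑ t, (F t)ᴴ * F t := by
  ext b b'
  simp only [mul_apply, conjTranspose_apply, Matrix.sum_apply,
    ← (stackIdx m s).sum_comp, Fintype.sum_prod_type, stackMat_stackIdx]

lemma stackMat_submatrix_stackIdx (W : Matrix (Fin (m * s)) (Fin n) ℂ) :
    stackMat (fun t => W.submatrix (fun p => stackIdx m s (t, p)) id) = W := by
  ext a b
  obtain ⟨⟨t, p⟩, rfl⟩ := (stackIdx m s).surjective a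
  simp only [stackMat_stackIdx, submatrix_apply, id]

end Stacking

section Dilation

variable {n m k s : ℕ}

theorem exists_unitary_dilation_of_kraus (x : Fin k → Fin n → ℂ) {y : Fin k → Fin m → ℂ}
    (hy : ∀ i, star (y i) ⬝ᵥ y i = 1) (F : Fin s → Matrix (Fin m) (Fin n) ℂ)
    (hF : ∑ t, (F t)ᴴ * F t = 1)
    (hFx : ∀ i, ∑ t, F t * vecMulVec (x i) (star (x i)) * (F t)ᴴ =
      vecMulVec (y i) (star (y i))) :
    n ≤ m * s ∧ ∃ v : Fin k → Fin s → ℂ,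
      (∀ i, star (v i) ⬝ᵥ v i = 1) ∧ ∃ U ∈ unitaryGroup (Fin (m * s)) ℂ,
        ∀ i, U *ᵥ padVec (m * s) (x i) = kronVec (v i) (y i) := by
  choose v hv hFv using fun i => exists_eq_smul_of_sum_vecMulVec_eq (hy i)
    (by simpa only [mul_vecMulVec_mul_conjTranspose] using hFx i)
  have hV : (stackMat F)ᴴ * stackMat F = 1 := (conjTranspose_stackMat_mul_self F).trans hF
  have hn : n ≤ m * s := by simpa using card_le_card_of_conjTranspose_mul_self_eq_one hV
  obtain ⟨U, hU, hUV⟩ := exists_mem_unitaryGroup_submatrix_eq (Fin.castLEEmb hn) hV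
  replace hUV : U.submatrix id (Fin.castLE hn) = stackMat F := hUV
  refine ⟨hn, v, hv, U, hU, fun i => ?_⟩
  rw [mulVec_padVec hn, hUV, stackMat_mulVec, kronVec_eq_stackVec]
  exact congrArg stackVec (funext (hFv i))

theorem exists_kraus_of_unitary_dilation {x : Fin k → Fin n → ℂ} {y : Fin k → Fin m → ℂ}
    (hn : n ≤ m * s) {v : Fin k → Fin s → ℂ} (hv : ∀ i, star (v i) ⬝ᵥ v i = 1)
    {U : Matrix (Fin (m * s)) (Fin (m * s)) ℂ} (hU : Uᴴ * U = 1)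
    (hUx : ∀ i, U *ᵥ padVec (m * s) (x i) = kronVec (v i) (y i)) :
    ∃ F : Fin s → Matrix (Fin m) (Fin n) ℂ, ∑ t, (F t)ᴴ * F t = 1 ∧
      ∀ i, ∑ t, F t * vecMulVec (x i) (star (x i)) * (F t)ᴴ =
        vecMulVec (y i) (star (y i)) := by
  set W := U.submatrix id (Fin.castLE hn)
  have hW : Wᴴ * W = 1 := by
    rw [conjTranspose_submatrix, ← submatrix_mul _ _ _ _ _ Function.bijective_id, hU,
      submatrix_one _ (Fin.castLE_injective hn)]
  set F := fun t => W.submatrix (fun p => stackIdx m s (t, p)) id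
  have hWF : stackMat F = W := stackMat_submatrix_stackIdx W
  refine ⟨F, by rw [← conjTranspose_stackMat_mul_self, hWF, hW], fun i => ?_⟩
  have hFx : (fun t => F t *ᵥ x i) = fun t => v i t • y i := stackVec_injective <| by
    rw [← stackMat_mulVec, hWF, ← mulVec_padVec, hUx, kronVec_eq_stackVec]
  simp only [mul_vecMulVec_mul_conjTranspose, funext_iff.mp hFx, sum_vecMulVec_smul (hv i)]

end Dilation

theorem stmt_12_general {n m k : ℕ} (x : Fin k → Fin n → ℂ) (y : Fin k → Fin m → ℂ)
    (hy : ∀ i, star (y i) ⬝ᵥ y i = 1) :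
    (∃ (r : ℕ) (F : Fin r → Matrix (Fin m) (Fin n) ℂ),
        (∑ j, (F j)ᴴ * F j = 1) ∧
        ∀ i, (∑ j, F j * vecMulVec (x i) (star (x i)) * (F j)ᴴ) =
          vecMulVec (y i) (star (y i))) ↔
    (∃ (s : ℕ), 0 < s ∧ n ≤ m * s ∧
      ∃ (v : Fin k → Fin s → ℂ) (U : Matrix (Fin (m * s)) (Fin (m * s)) ℂ),
        (∀ i, star (v i) ⬝ᵥ v i = 1) ∧
        Uᴴ * U = 1 ∧ U * Uᴴ = 1 ∧
        ∀ i, U *ᵥ padVec (m * s) (x i) = kronVec (v i) (y i)) := by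
  constructor
  · rintro ⟨r, F, hF, hFx⟩
    -- a zero Kraus operator in front makes `s = r + 1` positive
    obtain ⟨hn, v, hv, U, hU, hUx⟩ := exists_unitary_dilation_of_kraus x hy (Fin.cons 0 F)
      (by simpa [Fin.sum_univ_succ] using hF) (fun i => by simpa [Fin.sum_univ_succ] using hFx i)
    exact ⟨r + 1, r.succ_pos, hn, v, U, hv, mem_unitaryGroup_iff'.mp hU,
      mem_unitaryGroup_iff.mp hU, hUx⟩
  · rintro ⟨s, -, hn, v, U, hv, hU, -, hUx⟩
    exact ⟨s, exists_kraus_of_unitary_dilation hn hv hU hUx⟩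

/-- TPCP maps between pure state families, characterized via a unitary dilation. -/
theorem stmt_12 {n m k : ℕ} (x : Fin k → Fin n → ℂ) (y : Fin k → Fin m → ℂ)
    (hx : ∀ i, star (x i) ⬝ᵥ x i = 1) (hy : ∀ i, star (y i) ⬝ᵥ y i = 1) :
    (∃ (r : ℕ) (F : Fin r → Matrix (Fin m) (Fin n) ℂ),
        (∑ j, (F j)ᴴ * F j = 1) ∧
        ∀ i, (∑ j, F j * vecMulVec (x i) (star (x i)) * (F j)ᴴ) =
          vecMulVec (y i) (star (y i))) ↔
    (∃ (s : ℕ), 0 < s ∧ n ≤ m * s ∧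
      ∃ (v : Fin k → Fin s → ℂ) (U : Matrix (Fin (m * s)) (Fin (m * s)) ℂ),
        (∀ i, star (v i) ⬝ᵥ v i = 1) ∧
        Uᴴ * U = 1 ∧ U * Uᴴ = 1 ∧
        ∀ i, U *ᵥ padVec (m * s) (x i) = kronVec (v i) (y i)) :=
  stmt_12_general x y hy
end

section
/- Let x₁,…,x_k ∈ ℂⁿ and y₁,…,y_k ∈ ℂᵐ be nonzero vectors, let B ∈ M_m(ℂ) be positive semidefinite, let X = [x₁|…|x_k] ∈ M_{n,k}(ℂ) and Y = [y₁|…|y_k] ∈ M_{m,k}(ℂ), and let G ∈ M_k(ℂ) be the Moore–Penrose inverse of XᴴX, i.e., the unique matrix satisfying (XᴴX)G(XᴴX) = XᴴX, G(XᴴX)G = G, ((XᴴX)G)ᴴ = (XᴴX)G, and (G(XᴴX))ᴴ = G(XᴴX). There exists a completely positive map T : M_n(ℂ) → M_m(ℂ) with T(I_n) = B and T(x_ix_iᴴ) = y_iy_iᴴ for i = 1,…,k if and only if there exists a positive semidefinite matrix M ∈ M_k(ℂ) with all diagonal entries equal to 1 such that (1) every vector v ∈ ℂᵏ with (XᴴX)v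 = 0 also satisfies (M ∘ (YᴴY))v = 0, and (2) B − Y(M̄ ∘ G)Yᴴ is positive semidefinite, with B = Y(M̄ ∘ G)Yᴴ in the case that X has rank n. Here M̄ denotes the entrywise complex conjugate of M. -/
open Matrix
open scoped ComplexOrder

/-!
Write `T = ∑ⱼ Fⱼ (·) Fⱼᴴ`. The identity `∑ⱼ (Fⱼ xᵢ)(Fⱼ xᵢ)ᴴ = yᵢ yᵢᴴ` forces `Fⱼ xᵢ = cⱼᵢ yᵢ` with
`∑ⱼ |cⱼᵢ|² = 1`, that is `Fⱼ X = Y Dⱼ` for `Dⱼ = diag cⱼ`, and `M = CᴴC` has unit diagonal.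
Entrywise, `M ∘ YᴴY = ∑ⱼ (Y Dⱼ)ᴴ (Y Dⱼ)` and `Y (M̄ ∘ G) Yᴴ = ∑ⱼ Y Dⱼ G (Y Dⱼ)ᴴ`. The first gives
the kernel condition, as `ker XᴴX = ker X`. The second is `∑ⱼ Fⱼ P Fⱼᴴ` for the orthogonal
projection `P = X G Xᴴ` onto the range of `X`, so `B - Y (M̄ ∘ G) Yᴴ = ∑ⱼ Fⱼ (1 - P) Fⱼᴴ ≥ 0`,
with equality when `X` has rank `n`, since then `P = 1`.

Conversely, factor `M = CᴴC` and take `Fⱼ = Y Dⱼ G Xᴴ`. The kernel condition gives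
`ker XᴴX ⊆ ker (Y Dⱼ)`, hence `Fⱼ X = Y Dⱼ G XᴴX = Y Dⱼ`, and `∑ⱼ Fⱼ Fⱼᴴ = Y (M̄ ∘ G) Yᴴ`. The
remainder `B - Y (M̄ ∘ G) Yᴴ = ∑ₜ vₜ vₜᴴ` is supplied by further Kraus operators `vₜ wᴴ`, with
`w ≠ 0` orthogonal to the range of `X` and normalised; such a `w` exists unless `X` has rank `n`,
and then the remainder is `0`.
-/

namespace Matrix

section MoorePenrose

variable {m n α : Type*} [Fintype m] [Fintype n] [Semiring α] [StarRing α]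

structure IsMoorePenroseInverse (A : Matrix m n α) (G : Matrix n m α) : Prop where
  mul_mul_self : A * G * A = A
  self_mul_mul : G * A * G = G
  isHermitian_mul : (A * G).IsHermitian
  isHermitian_mul' : (G * A).IsHermitian

namespace IsMoorePenroseInverse

variable {A : Matrix m n α} {G H : Matrix n m α}

protected theorem conjTranspose (hG : IsMoorePenroseInverse A G) :
    IsMoorePenroseInverse Aᴴ Gᴴ where
  mul_mul_self := by
    simpa only [conjTranspose_mul, Matrix.mul_assoc] using congr_arg (·ᴴ) hG.mul_mul_self
  self_mul_mul := by
    simpa only [conjTranspose_mul, Matrix.mul_assoc] using congr_arg (·ᴴ) hG.self_mul_mul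
  isHermitian_mul := by
    rw [← conjTranspose_mul, hG.isHermitian_mul'.eq]; exact hG.isHermitian_mul'
  isHermitian_mul' := by
    rw [← conjTranspose_mul, hG.isHermitian_mul.eq]; exact hG.isHermitian_mul

theorem eq_mul_mul (hG : IsMoorePenroseInverse A G) (hH : IsMoorePenroseInverse A H) :
    G = G * A * H :=
  calc G = G * (A * G)ᴴ := by rw [hG.isHermitian_mul.eq, ← Matrix.mul_assoc, hG.self_mul_mul]
    _ = G * (A * H * A * G)ᴴ := by rw [hH.mul_mul_self]
    _ = G * (A * G)ᴴ * (A * H)ᴴ := by simp only [conjTranspose_mul, Matrix.mul_assoc]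
    _ = G * A * H := by
      rw [hG.isHermitian_mul.eq, hH.isHermitian_mul.eq, ← Matrix.mul_assoc G,
        hG.self_mul_mul, Matrix.mul_assoc]

theorem unique (hG : IsMoorePenroseInverse A G) (hH : IsMoorePenroseInverse A H) : G = H := by
  have hH' : H = G * A * H := by
    simpa only [conjTranspose_mul, conjTranspose_conjTranspose, Matrix.mul_assoc] using
      congr_arg (·ᴴ) (hH.conjTranspose.eq_mul_mul hG.conjTranspose)
  rw [hH', ← hG.eq_mul_mul hH]

theorem isHermitian {A G : Matrix n n α} (hA : A.IsHermitian) (hG : IsMoorePenroseInverse A G) :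
    G.IsHermitian := by
  have hG' := hG.conjTranspose
  rw [hA.eq] at hG'
  exact hG'.unique hG

end IsMoorePenroseInverse

end MoorePenrose

variable {m n k ι 𝕜 : Type*} [RCLike 𝕜]

section RangeProjection

variable [Fintype n] [Fintype k] {X : Matrix n k 𝕜} {G : Matrix k k 𝕜}

namespace IsMoorePenroseInverse

theorem mul_mul_conjTranspose_mul (hG : IsMoorePenroseInverse (Xᴴ * X) G) :
    X * G * Xᴴ * X = X := by
  classical
  have hker : Xᴴ * X * (G * (Xᴴ * X) - 1) = 0 := by
    rw [Matrix.mul_sub, Matrix.mul_one, ← Matrix.mul_assoc, hG.mul_mul_self, sub_self]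
  have h : X * (G * (Xᴴ * X) - 1) = 0 := by
    rw [← conjTranspose_mul_self_eq_zero, conjTranspose_mul, Matrix.mul_assoc,
      ← Matrix.mul_assoc Xᴴ, hker, Matrix.mul_zero]
  rwa [Matrix.mul_sub, Matrix.mul_one, sub_eq_zero, ← Matrix.mul_assoc, ← Matrix.mul_assoc] at h

variable [DecidableEq n]

theorem posSemidef_one_sub_mul_mul_conjTranspose (hG : IsMoorePenroseInverse (Xᴴ * X) G) :
    (1 - X * G * Xᴴ).PosSemidef := by
  have hP : (X * G * Xᴴ).IsHermitian :=
    isHermitian_mul_mul_conjTranspose X (hG.isHermitian (isHermitian_conjTranspose_mul_self X))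
  have hPP : X * G * Xᴴ * (X * G * Xᴴ) = X * G * Xᴴ := by
    rw [← Matrix.mul_assoc, ← Matrix.mul_assoc, hG.mul_mul_conjTranspose_mul]
  have h : 1 - X * G * Xᴴ = (1 - X * G * Xᴴ)ᴴ * (1 - X * G * Xᴴ) := by
    rw [conjTranspose_sub, conjTranspose_one, hP.eq, Matrix.sub_mul, Matrix.mul_sub,
      Matrix.mul_sub, hPP, Matrix.one_mul, Matrix.mul_one, Matrix.one_mul, sub_self, sub_zero]
  rw [h]
  exact posSemidef_conjTranspose_mul_self _

theorem mul_mul_conjTranspose_eq_one (hG : IsMoorePenroseInverse (Xᴴ * X) G)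
    (hX : X.rank = Fintype.card n) : X * G * Xᴴ = 1 := by
  have hsurj : Function.Surjective X.mulVecLin := by
    rw [← LinearMap.range_eq_top]
    apply Submodule.eq_top_of_finrank_eq
    rw [← Matrix.rank, hX, Module.finrank_fintype_fun_eq_card]
  refine ext_of_mulVec_single fun i => ?_
  obtain ⟨w, hw⟩ := hsurj (Pi.single i 1)
  rw [one_mulVec, ← hw, mulVecLin_apply, mulVec_mulVec, hG.mul_mul_conjTranspose_mul]

end IsMoorePenroseInverse

theorem exists_ne_zero_vecMul_eq_zero_of_rank_ne (h : X.rank ≠ Fintype.card n) :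
    ∃ w ≠ 0, w ᵥ* X = 0 := by
  have hker : LinearMap.ker Xᵀ.mulVecLin ≠ ⊥ := by
    intro hbot
    have := Xᵀ.mulVecLin.finrank_range_add_finrank_ker
    rw [hbot, finrank_bot, add_zero, ← Matrix.rank, rank_transpose,
      Module.finrank_fintype_fun_eq_card] at this
    exact h this
  obtain ⟨w, hw, hw0⟩ := (Submodule.ne_bot_iff _).1 hker
  exact ⟨w, hw0, by rwa [← mulVec_transpose]⟩

theorem exists_sum_mul_conjTranspose_eq_of_rank_ne [Fintype m] {R : Matrix m m 𝕜}
    (hR : R.PosSemidef) (hX : X.rank ≠ Fintype.card n) :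
    ∃ (s : ℕ) (E : Fin s → Matrix m n 𝕜), ∑ t, E t * (E t)ᴴ = R ∧ ∀ t, E t * X = 0 := by
  obtain ⟨w, hw0, hwX⟩ := exists_ne_zero_vecMul_eq_zero_of_rank_ne hX
  have hw : 0 < w ⬝ᵥ star w := dotProduct_self_star_pos_iff.2 hw0
  obtain ⟨s, v, hv⟩ := posSemidef_iff_eq_sum_vecMulVec.1 (hR.smul (inv_pos.2 hw).le)
  refine ⟨s, fun t => vecMulVec (v t) w, ?_, fun t => ?_⟩
  · simp_rw [conjTranspose_vecMulVec, vecMulVec_mul_vecMulVec, vecMulVec_smul]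
    rw [← Finset.smul_sum, ← hv, smul_smul, mul_inv_cancel₀ hw.ne', one_smul]
  · ext
    simp [vecMulVec_mul, hwX, vecMulVec_apply]

end RangeProjection

section SumOfSquares

variable [Fintype m] [Fintype ι]

theorem mulVec_eq_zero_of_sum_conjTranspose_mul_self_mulVec_eq_zero [Fintype n]
    {A : ι → Matrix m n 𝕜} {v : n → 𝕜} (h : (∑ j, (A j)ᴴ * A j) *ᵥ v = 0) (j : ι) :
    A j *ᵥ v = 0 := by
  have hsum : ∑ j, star (A j *ᵥ v) ⬝ᵥ (A j *ᵥ v) = 0 := by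
    simpa [sum_mulVec, dotProduct_sum, ← mulVec_mulVec, dotProduct_mulVec, star_mulVec]
      using congr_arg (star v ⬝ᵥ ·) h
  exact dotProduct_star_self_eq_zero.1 <|
    (Finset.sum_eq_zero_iff_of_nonneg fun j _ => dotProduct_star_self_nonneg _).1 hsum j
      (Finset.mem_univ j)

theorem exists_eq_smul_of_sum_vecMulVec_eq {u : ι → m → 𝕜} {y : m → 𝕜} (hy : y ≠ 0)
    (h : ∑ j, vecMulVec (u j) (star (u j)) = vecMulVec y (star y)) :
    ∃ c : ι → 𝕜, (∀ j, u j = c j • y) ∧ ∑ j, star (c j) * c j = 1 := by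
  have hyy : star y ⬝ᵥ y ≠ 0 := mt dotProduct_star_self_eq_zero.1 hy
  have orth {z : m → 𝕜} (hz : star y ⬝ᵥ z = 0) (j : ι) : star (u j) ⬝ᵥ z = 0 := by
    have hA : (∑ j, (replicateRow Unit (star (u j)))ᴴ * replicateRow Unit (star (u j))) *ᵥ z
        = 0 := by
      simp_rw [conjTranspose_replicateRow, star_star, ← vecMulVec_eq, h, vecMulVec_mulVec, hz]
      simp
    exact congr_fun (mulVec_eq_zero_of_sum_conjTranspose_mul_self_mulVec_eq_zero hA j) ()
  set c : ι → 𝕜 := fun j => (star y ⬝ᵥ u j) / (star y ⬝ᵥ y)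
  have hu (j : ι) : u j = c j • y := by
    have hz : star y ⬝ᵥ (u j - c j • y) = 0 := by
      rw [dotProduct_sub, dotProduct_smul, smul_eq_mul, div_mul_cancel₀ _ hyy, sub_self]
    have hzz : star (u j - c j • y) ⬝ᵥ (u j - c j • y) = 0 := by
      rw [star_sub, sub_dotProduct, star_smul, smul_dotProduct, orth hz, hz, smul_zero, sub_zero]
    exact sub_eq_zero.1 (dotProduct_star_self_eq_zero.1 hzz)
  refine ⟨c, hu, smul_left_injective 𝕜 (by simpa using hy : vecMulVec y (star y) ≠ 0) ?_⟩
  calc (∑ j, star (c j) * c j) • vecMulVec y (star y)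
      = ∑ j, vecMulVec (u j) (star (u j)) := by
        rw [Finset.sum_smul]
        refine Finset.sum_congr rfl fun j _ => ?_
        rw [hu j, star_smul, smul_vecMulVec, vecMulVec_smul, smul_smul, mul_comm]
    _ = (1 : 𝕜) • vecMulVec y (star y) := by rw [h, one_smul]

theorem posSemidef_iff_exists_eq_conjTranspose_mul_self {M : Matrix m m 𝕜} :
    M.PosSemidef ↔ ∃ (r : ℕ) (C : Matrix (Fin r) m 𝕜), M = Cᴴ * C := by
  refine ⟨fun hM => ?_, fun ⟨r, C, hC⟩ => hC ▸ posSemidef_conjTranspose_mul_self C⟩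
  obtain ⟨r, v, rfl⟩ := posSemidef_iff_eq_sum_vecMulVec.1 hM
  refine ⟨r, of fun j => star (v j), ?_⟩
  ext a b
  simp [mul_apply, vecMulVec_apply, Matrix.sum_apply]

end SumOfSquares

section Hadamard

variable [Fintype k] [Fintype ι] [DecidableEq k]

theorem conjTranspose_mul_self_hadamard (C : Matrix ι k 𝕜) (A : Matrix k k 𝕜) :
    (Cᴴ * C) ⊙ A = ∑ j, diagonal (star (C j)) * A * diagonal (C j) := by
  ext a b
  simp only [hadamard_apply, Matrix.sum_apply, diagonal_mul, mul_diagonal]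
  simp only [mul_apply, conjTranspose_apply, Finset.sum_mul, Pi.star_apply]
  exact Finset.sum_congr rfl fun j _ => by ring

theorem conjTranspose_mul_self_hadamard_conjTranspose_mul_self [Fintype m] (C : Matrix ι k 𝕜)
    (Y : Matrix m k 𝕜) :
    (Cᴴ * C) ⊙ (Yᴴ * Y) = ∑ j, (Y * diagonal (C j))ᴴ * (Y * diagonal (C j)) := by
  simp only [conjTranspose_mul_self_hadamard, conjTranspose_mul, diagonal_conjTranspose,
    Matrix.mul_assoc]

theorem map_star_conjTranspose_mul_self_hadamard (C : Matrix ι k 𝕜) (A : Matrix k k 𝕜) :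
    (Cᴴ * C).map (starRingEnd 𝕜) ⊙ A = ∑ j, diagonal (C j) * A * (diagonal (C j))ᴴ := by
  ext a b
  simp only [hadamard_apply, Matrix.sum_apply, diagonal_conjTranspose, diagonal_mul,
    mul_diagonal]
  simp only [map_apply, mul_apply, conjTranspose_apply, map_sum, Finset.sum_mul, Pi.star_apply,
    map_mul, RCLike.star_def, RCLike.conj_conj]
  exact Finset.sum_congr rfl fun j _ => by ring

theorem mul_map_star_conjTranspose_mul_self_hadamard_mul (C : Matrix ι k 𝕜) (Y : Matrix m k 𝕜)
    (G : Matrix k k 𝕜) :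
    Y * ((Cᴴ * C).map (starRingEnd 𝕜) ⊙ G) * Yᴴ
      = ∑ j, Y * diagonal (C j) * G * (Y * diagonal (C j))ᴴ := by
  simp only [map_star_conjTranspose_mul_self_hadamard, Matrix.mul_sum, Matrix.sum_mul,
    conjTranspose_mul, Matrix.mul_assoc]

theorem mul_eq_mul_diagonal_iff [Fintype n] {F : Matrix m n 𝕜} {X : Matrix n k 𝕜}
    {Y : Matrix m k 𝕜} {c : k → 𝕜} :
    F * X = Y * diagonal c ↔ ∀ i, F *ᵥ Xᵀ i = c i • Yᵀ i := by
  simp only [← Matrix.ext_iff, funext_iff, mul_diagonal, Pi.smul_apply, smul_eq_mul]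
  rw [forall_comm]
  exact forall₂_congr fun i a => by rw [mul_comm]; rfl

end Hadamard

theorem mul_vecMulVec_star_mul_conjTranspose [Fintype n] (F : Matrix m n 𝕜) (x : n → 𝕜) :
    F * vecMulVec x (star x) * Fᴴ = vecMulVec (F *ᵥ x) (star (F *ᵥ x)) := by
  rw [mul_vecMulVec, vecMulVec_mul, star_mulVec]

section Kraus

variable [Fintype n] [Fintype k] [Fintype ι] [DecidableEq k]
  {X : Matrix n k 𝕜} {Y : Matrix m k 𝕜} {G : Matrix k k 𝕜}

theorem sum_mul_vecMulVec_mul_conjTranspose_eq {F : ι → Matrix m n 𝕜} {C : Matrix ι k 𝕜}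
    (hFX : ∀ j, F j * X = Y * diagonal (C j)) (hC : ∀ i, (Cᴴ * C) i i = 1) (i : k) :
    ∑ j, F j * vecMulVec (Xᵀ i) (star (Xᵀ i)) * (F j)ᴴ = vecMulVec (Yᵀ i) (star (Yᵀ i)) := by
  simp_rw [mul_vecMulVec_star_mul_conjTranspose, mul_eq_mul_diagonal_iff.1 (hFX _), star_smul,
    smul_vecMulVec, vecMulVec_smul, smul_smul, ← Finset.sum_smul]
  convert one_smul 𝕜 _
  rw [← hC i, mul_apply]
  exact Finset.sum_congr rfl fun j _ => mul_comm _ _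

theorem sum_mul_diagonal_mul_mul_conjTranspose_mul_conjTranspose {C : Matrix ι k 𝕜}
    (hG : IsMoorePenroseInverse (Xᴴ * X) G) :
    ∑ j, Y * diagonal (C j) * G * Xᴴ * (Y * diagonal (C j) * G * Xᴴ)ᴴ
      = Y * ((Cᴴ * C).map (starRingEnd 𝕜) ⊙ G) * Yᴴ := by
  rw [mul_map_star_conjTranspose_mul_self_hadamard_mul]
  refine Finset.sum_congr rfl fun j _ => ?_
  have hGh : Gᴴ = G := (hG.isHermitian (isHermitian_conjTranspose_mul_self X)).eq
  calc _ = Y * diagonal (C j) * (G * (Xᴴ * X) * G) * (Y * diagonal (C j))ᴴ := by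
        simp only [conjTranspose_mul, conjTranspose_conjTranspose, hGh, Matrix.mul_assoc]
    _ = _ := by rw [hG.self_mul_mul]

variable [Fintype m]

theorem exists_mul_eq_mul_diagonal_of_kraus {F : ι → Matrix m n 𝕜} (hY : ∀ i, Yᵀ i ≠ 0)
    (hF : ∀ i, ∑ j, F j * vecMulVec (Xᵀ i) (star (Xᵀ i)) * (F j)ᴴ =
      vecMulVec (Yᵀ i) (star (Yᵀ i))) :
    ∃ C : Matrix ι k 𝕜, (∀ j, F j * X = Y * diagonal (C j)) ∧ ∀ i, (Cᴴ * C) i i = 1 := by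
  simp_rw [mul_vecMulVec_star_mul_conjTranspose] at hF
  choose c hc hc1 using fun i => exists_eq_smul_of_sum_vecMulVec_eq (hY i) (hF i)
  exact ⟨of fun j i => c i j, fun j => mul_eq_mul_diagonal_iff.2 fun i => hc i j, hc1⟩

theorem exists_correlation_of_kraus {F : ι → Matrix m n 𝕜} (hY : ∀ i, Yᵀ i ≠ 0)
    (hG : IsMoorePenroseInverse (Xᴴ * X) G)
    (hF : ∀ i, ∑ j, F j * vecMulVec (Xᵀ i) (star (Xᵀ i)) * (F j)ᴴ =
      vecMulVec (Yᵀ i) (star (Yᵀ i))) :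
    ∃ M : Matrix k k 𝕜, M.PosSemidef ∧ (∀ i, M i i = 1) ∧
      (∀ v, (Xᴴ * X) *ᵥ v = 0 → (M ⊙ (Yᴴ * Y)) *ᵥ v = 0) ∧
      (∑ j, F j * (F j)ᴴ - Y * (M.map (starRingEnd 𝕜) ⊙ G) * Yᴴ).PosSemidef ∧
      (X.rank = Fintype.card n → ∑ j, F j * (F j)ᴴ = Y * (M.map (starRingEnd 𝕜) ⊙ G) * Yᴴ) := by
  classical
  obtain ⟨C, hFX, hC⟩ := exists_mul_eq_mul_diagonal_of_kraus hY hF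
  have hgram : Y * ((Cᴴ * C).map (starRingEnd 𝕜) ⊙ G) * Yᴴ =
      ∑ j, F j * (X * G * Xᴴ) * (F j)ᴴ := by
    rw [mul_map_star_conjTranspose_mul_self_hadamard_mul]
    refine Finset.sum_congr rfl fun j _ => ?_
    rw [← hFX]
    simp only [conjTranspose_mul, Matrix.mul_assoc]
  refine ⟨Cᴴ * C, posSemidef_conjTranspose_mul_self C, hC, fun v hv => ?_, ?_, fun h => ?_⟩
  · have hXv : X *ᵥ v = 0 := (conjTranspose_mul_self_mulVec_eq_zero X v).1 hv
    rw [conjTranspose_mul_self_hadamard_conjTranspose_mul_self, sum_mulVec]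
    refine Finset.sum_eq_zero fun j _ => ?_
    rw [← hFX, ← mulVec_mulVec, ← mulVec_mulVec, hXv, mulVec_zero, mulVec_zero]
  · rw [hgram, ← Finset.sum_sub_distrib]
    refine posSemidef_sum _ fun j _ => ?_
    simpa [Matrix.mul_sub, Matrix.sub_mul, Matrix.mul_assoc] using
      hG.posSemidef_one_sub_mul_mul_conjTranspose.mul_mul_conjTranspose_same (F j)
  · rw [hgram, hG.mul_mul_conjTranspose_eq_one h]
    simp only [Matrix.mul_one]

theorem mul_diagonal_mul_mul_conjTranspose_mul {C : Matrix ι k 𝕜}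
    (hG : IsMoorePenroseInverse (Xᴴ * X) G)
    (hker : ∀ v, (Xᴴ * X) *ᵥ v = 0 → ((Cᴴ * C) ⊙ (Yᴴ * Y)) *ᵥ v = 0) (j : ι) :
    Y * diagonal (C j) * G * Xᴴ * X = Y * diagonal (C j) := by
  have hN (v : k → 𝕜) (hv : (Xᴴ * X) *ᵥ v = 0) : (Y * diagonal (C j)) *ᵥ v = 0 := by
    refine mulVec_eq_zero_of_sum_conjTranspose_mul_self_mulVec_eq_zero
      (A := fun j => Y * diagonal (C j)) ?_ j
    rw [← conjTranspose_mul_self_hadamard_conjTranspose_mul_self]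
    exact hker v hv
  have hZ : Xᴴ * X * (G * (Xᴴ * X) - 1) = 0 := by
    rw [Matrix.mul_sub, ← Matrix.mul_assoc, hG.mul_mul_self, Matrix.mul_one, sub_self]
  have hNZ : Y * diagonal (C j) * (G * (Xᴴ * X) - 1) = 0 := ext_of_mulVec_single fun i => by
    rw [← mulVec_mulVec, zero_mulVec]
    exact hN _ (by rw [mulVec_mulVec, hZ, zero_mulVec])
  rw [Matrix.mul_sub, Matrix.mul_one, sub_eq_zero] at hNZ
  simpa only [Matrix.mul_assoc] using hNZ

theorem exists_kraus_of_correlation (hG : IsMoorePenroseInverse (Xᴴ * X) G) {B : Matrix m m 𝕜}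
    {M : Matrix k k 𝕜} (hM : M.PosSemidef) (hdiag : ∀ i, M i i = 1)
    (hker : ∀ v, (Xᴴ * X) *ᵥ v = 0 → (M ⊙ (Yᴴ * Y)) *ᵥ v = 0)
    (hB : (B - Y * (M.map (starRingEnd 𝕜) ⊙ G) * Yᴴ).PosSemidef)
    (hrank : X.rank = Fintype.card n → B = Y * (M.map (starRingEnd 𝕜) ⊙ G) * Yᴴ) :
    ∃ (r : ℕ) (F : Fin r → Matrix m n 𝕜), ∑ j, F j * (F j)ᴴ = B ∧
      ∀ i, ∑ j, F j * vecMulVec (Xᵀ i) (star (Xᵀ i)) * (F j)ᴴ = vecMulVec (Yᵀ i) (star (Yᵀ i)) := by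
  obtain ⟨r, C, rfl⟩ := posSemidef_iff_exists_eq_conjTranspose_mul_self.1 hM
  obtain ⟨s, E, hE, hEX⟩ : ∃ (s : ℕ) (E : Fin s → Matrix m n 𝕜),
      ∑ t, E t * (E t)ᴴ = B - Y * ((Cᴴ * C).map (starRingEnd 𝕜) ⊙ G) * Yᴴ ∧ ∀ t, E t * X = 0 := by
    by_cases h : X.rank = Fintype.card n
    · exact ⟨0, Fin.elim0, by rw [← hrank h, sub_self, Fin.sum_univ_zero], fun t => t.elim0⟩
    · exact exists_sum_mul_conjTranspose_eq_of_rank_ne hB h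
  refine ⟨r + s, Fin.append (fun j => Y * diagonal (C j) * G * Xᴴ) E, ?_, fun i => ?_⟩
  · rw [Fin.sum_univ_add]
    simp only [Fin.append_left, Fin.append_right]
    rw [sum_mul_diagonal_mul_mul_conjTranspose_mul_conjTranspose hG, hE, add_sub_cancel]
  · rw [Fin.sum_univ_add]
    simp only [Fin.append_left, Fin.append_right]
    rw [sum_mul_vecMulVec_mul_conjTranspose_eq (mul_diagonal_mul_mul_conjTranspose_mul hG hker)
      hdiag i, add_eq_left]
    refine Finset.sum_eq_zero fun t _ => ?_
    have hEx : E t *ᵥ Xᵀ i = 0 := funext fun a => congr_fun₂ (hEX t) a i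
    simp [mul_vecMulVec_star_mul_conjTranspose, hEx]

end Kraus

end Matrix

theorem stmt_18_general {n m k : ℕ} (x : Fin k → Fin n → ℂ) (y : Fin k → Fin m → ℂ)
    (hy : ∀ i, y i ≠ 0)
    (B : Matrix (Fin m) (Fin m) ℂ)
    (X : Matrix (Fin n) (Fin k) ℂ) (hX : X = Matrix.of fun a i => x i a)
    (Y : Matrix (Fin m) (Fin k) ℂ) (hY : Y = Matrix.of fun a i => y i a)
    (G : Matrix (Fin k) (Fin k) ℂ)
    (hG1 : (Xᴴ * X) * G * (Xᴴ * X) = Xᴴ * X) (hG2 : G * (Xᴴ * X) * G = G)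
    (hG3 : ((Xᴴ * X) * G)ᴴ = (Xᴴ * X) * G) (hG4 : (G * (Xᴴ * X))ᴴ = G * (Xᴴ * X)) :
    (∃ (r : ℕ) (F : Fin r → Matrix (Fin m) (Fin n) ℂ),
        (∑ j, F j * (F j)ᴴ) = B ∧
        ∀ i, (∑ j, F j * vecMulVec (x i) (star (x i)) * (F j)ᴴ) =
          vecMulVec (y i) (star (y i))) ↔
    (∃ M : Matrix (Fin k) (Fin k) ℂ, M.PosSemidef ∧ (∀ i, M i i = 1) ∧
        (∀ v : Fin k → ℂ, (Xᴴ * X) *ᵥ v = 0 → Matrix.hadamard M (Yᴴ * Y) *ᵥ v = 0) ∧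
        (B - Y * Matrix.hadamard (M.map (starRingEnd ℂ)) G * Yᴴ).PosSemidef ∧
        (X.rank = n → B = Y * Matrix.hadamard (M.map (starRingEnd ℂ)) G * Yᴴ)) := by
  have hG : IsMoorePenroseInverse (Xᴴ * X) G := ⟨hG1, hG2, hG3, hG4⟩
  subst hX hY
  constructor
  · rintro ⟨r, F, rfl, hF⟩
    obtain ⟨M, hM, hdiag, hker, hB, hrank⟩ := exists_correlation_of_kraus hy hG hF
    exact ⟨M, hM, hdiag, hker, hB, fun h => hrank (by rw [h, Fintype.card_fin])⟩
  · rintro ⟨M, hM, hdiag, hker, hB, hrank⟩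
    exact exists_kraus_of_correlation hG hM hdiag hker hB
      fun h => hrank (by rwa [Fintype.card_fin] at h)

/-- A completely positive map `T` with `T(Iₙ) = B` and `T(xᵢxᵢᴴ) = yᵢyᵢᴴ` exists iff
there is a positive semidefinite `M` with unit diagonal such that
(1) `ker XᴴX ⊆ ker (M ∘ YᴴY)` and (2) `Y(M̄ ∘ (XᴴX)⁺)Yᴴ ≤ B` (with equality if
`X` has rank `n`), where `(XᴴX)⁺ = G` is the Moore–Penrose inverse of `XᴴX`. -/
theorem stmt_18 {n m k : ℕ} (x : Fin k → Fin n → ℂ) (y : Fin k → Fin m → ℂ)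
    (hx : ∀ i, x i ≠ 0) (hy : ∀ i, y i ≠ 0)
    (B : Matrix (Fin m) (Fin m) ℂ) (hB : B.PosSemidef)
    (X : Matrix (Fin n) (Fin k) ℂ) (hX : X = Matrix.of fun a i => x i a)
    (Y : Matrix (Fin m) (Fin k) ℂ) (hY : Y = Matrix.of fun a i => y i a)
    (G : Matrix (Fin k) (Fin k) ℂ)
    (hG1 : (Xᴴ * X) * G * (Xᴴ * X) = Xᴴ * X) (hG2 : G * (Xᴴ * X) * G = G)
    (hG3 : ((Xᴴ * X) * G)ᴴ = (Xᴴ * X) * G) (hG4 : (G * (Xᴴ * X))ᴴ = G * (Xᴴ * X)) :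
    (∃ (r : ℕ) (F : Fin r → Matrix (Fin m) (Fin n) ℂ),
        (∑ j, F j * (F j)ᴴ) = B ∧
        ∀ i, (∑ j, F j * vecMulVec (x i) (star (x i)) * (F j)ᴴ) =
          vecMulVec (y i) (star (y i))) ↔
    (∃ M : Matrix (Fin k) (Fin k) ℂ, M.PosSemidef ∧ (∀ i, M i i = 1) ∧
        (∀ v : Fin k → ℂ, (Xᴴ * X) *ᵥ v = 0 → Matrix.hadamard M (Yᴴ * Y) *ᵥ v = 0) ∧
        (B - Y * Matrix.hadamard (M.map (starRingEnd ℂ)) G * Yᴴ).PosSemidef ∧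
        (X.rank = n → B = Y * Matrix.hadamard (M.map (starRingEnd ℂ)) G * Yᴴ)) :=
  stmt_18_general x y hy B X hX Y hY G hG1 hG2 hG3 hG4
end
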